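/- Let ω be a weight on 𝔻 such that ω(S(a)) > 0 for all a ∈ 𝔻\{0}. Then the following statements are equivalent: (i) ω ∈ D̂(𝔻); (ii) there exist β = β(ω) > 0 and C = C(ω) ≥ 1 such that ω(S(a))/(1-|a|)^β ≤ C ω(S(a'))/(1-|a'|)^β for all 0 < |a| ≤ |a'| < 1 with arg a = arg a'; (iii) for each K > 0 there exists C = C(ω,K) > 0 such that ω(S(a)) ≤ C ω(S( ((K+|a|)/(K+1)) e^{i arg a} )) for all a ∈ 𝔻\{0}; (iv) there exist η = η(ω) > 0 and C = C(η,ω) > 0 such that ∫_𝔻 ω(z)/|1-āz|^η dA(z) ≤ C ω(S(a))/(1-|a|)^η for all a ∈ 𝔻\{0}. -/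

import Mathlib

open MeasureTheory Complex Set Filter Topology
open scoped ENNReal NNReal

noncomputable section

/-- The normalized Lebesgue area measure `dA = dx dy / π` on `ℂ` (the unit disc has mass 1). -/
def dA : Measure ℂ := (ENNReal.ofReal Real.pi)⁻¹ • volume

/-- The open unit disc `𝔻 = {z : |z| < 1}`. -/
def uD : Set ℂ := Metric.ball (0 : ℂ) 1

/-- The Carleson square `S(a)`, for `a ∈ 𝔻 \ {0}`:
`S(a) = {w ∈ 𝔻 : |a| < |w| < 1, |arg (a e^{-i arg w})| < (1-|a|)/2}`. -/
def cSq (a : ℂ) : Set ℂ :=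
  {w : ℂ | ‖a‖ < ‖w‖ ∧ ‖w‖ < 1 ∧
    |Complex.arg (a * (starRingEnd ℂ) w)| < (1 - ‖a‖) / 2}

/-- Euclidean area of a set in `ℂ`. -/
def eArea (E : Set ℂ) : ℝ := (volume E).toReal

/-- `∫_E ω dA`. -/
def wInt (ω : ℂ → ℝ) (E : Set ℂ) : ℝ := ∫ z in E, ω z ∂dA

/-- A weight: a nonnegative function integrable over the unit disc w.r.t. `dA`. -/
def IsWeight (ω : ℂ → ℝ) : Prop := (∀ z, 0 ≤ ω z) ∧ IntegrableOn ω uD dA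

/-- Almost everywhere strictly positive on `𝔻`. -/
def AEPos (ω : ℂ → ℝ) : Prop := ∀ᵐ z ∂(dA.restrict uD), 0 < ω z

/-- The quantity whose supremum over Carleson squares defines the `B_q` constant. -/
def BqAt (q : ℝ) (ω : ℂ → ℝ) (a : ℂ) : ℝ :=
  ((∫ z in cSq a, ω z * (1 - ‖z‖ ^ 2) ^ (2 * q) ∂dA) / eArea (cSq a) ^ 2) *
    ((∫ z in cSq a, ω z ^ (-(1 / (q - 1))) ∂dA) / eArea (cSq a) ^ 2) ^ (q - 1)

/-- The Bekollé–Bonami type class `B_q` (`1 < q < ∞`), for a.e. strictly positive weights. -/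
def MemBq (q : ℝ) (ω : ℂ → ℝ) : Prop :=
  1 < q ∧ AEPos ω ∧ ∃ C : ℝ, ∀ a : ℂ, a ≠ 0 → ‖a‖ < 1 → BqAt q ω a ≤ C

/-- The constant `B_q(ω)`, i.e. the supremum over all Carleson squares. -/
def BqNorm (q : ℝ) (ω : ℂ → ℝ) : ℝ :=
  sSup (BqAt q ω '' {a : ℂ | a ≠ 0 ∧ ‖a‖ < 1})

/-- `B_∞ = ⋃_{q>1} B_q`. -/
def MemBinf (ω : ℂ → ℝ) : Prop := ∃ q : ℝ, MemBq q ω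

/-- `‖f‖_{A^p_ω}^p = ∫_𝔻 |f|^p ω dA` (also used as the `L^p_ω` "norm" to the `p`). -/
def ApPow (p : ℝ) (ω : ℂ → ℝ) (f : ℂ → ℂ) : ℝ :=
  ∫ z in uD, ‖f z‖ ^ p * ω z ∂dA

/-- Membership in the weighted Bergman space `A^p_ω`. -/
def MemAp (p : ℝ) (ω : ℂ → ℝ) (f : ℂ → ℂ) : Prop :=
  DifferentiableOn ℂ f uD ∧
    IntegrableOn (fun z => ‖f z‖ ^ p * ω z) uD dA

/-- `Z : ι → ℂ` is the zero sequence (with multiplicities) of `f` on `𝔻`: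
every point of `𝔻` is hit by `Z` exactly `ord_f` many times. -/
def IsZeroSeqOf {ι : Type} (f : ℂ → ℂ) (Z : ι → ℂ) : Prop :=
  (∀ i, Z i ∈ uD) ∧
    ∀ z ∈ uD, {i | Z i = z}.Finite ∧
      ∀ h : AnalyticAt ℂ f z, analyticOrderAt f z = (Nat.card {i | Z i = z} : ℕ∞)

/-- `Z : ι → ℂ` is a subsequence of the zero sequence of `f` (multiplicities counted). -/
def IsZeroSubseqOf {ι : Type} (f : ℂ → ℂ) (Z : ι → ℂ) : Prop :=
  (∀ i, Z i ∈ uD ∧ f (Z i) = 0) ∧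
    ∀ z ∈ uD, {i | Z i = z}.Finite ∧
      ∀ h : AnalyticAt ℂ f z, (Nat.card {i | Z i = z} : ℕ∞) ≤ analyticOrderAt f z

/-- `Z` is a zero set for `A^p_ω`: the zero sequence of some nonzero `f ∈ A^p_ω`. -/
def IsZeroSetFor (p : ℝ) (ω : ℂ → ℝ) {ι : Type} (Z : ι → ℂ) : Prop :=
  ∃ f : ℂ → ℂ, MemAp p ω f ∧ (∃ z ∈ uD, f z ≠ 0) ∧ IsZeroSeqOf f Z

/-- `k_Z(z) = (|z|²/2) ∑_{a ∈ Z} (1-|a|²)²/|1-conj(a) z|²`. -/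
def kZ {ι : Type} (Z : ι → ℂ) (z : ℂ) : ℝ :=
  ‖z‖ ^ 2 / 2 *
    ∑' i, (1 - ‖Z i‖ ^ 2) ^ 2 / ‖1 - (starRingEnd ℂ) (Z i) * z‖ ^ 2

/-- `W_Z = e^{k_Z}`. -/
def WZ {ι : Type} (Z : ι → ℂ) (z : ℂ) : ℝ := Real.exp (kZ Z z)

/-- One factor of the infinite product appearing in Luecking's function `h`. -/
def zfac (a z : ℂ) : ℝ :=
  ‖(a - z) / (1 - (starRingEnd ℂ) a * z)‖ *
    Real.exp ((1 - ‖(a - z) / (1 - (starRingEnd ℂ) a * z)‖ ^ 2) / 2)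

/-- Luecking's auxiliary function `h`. -/
def hFun {ι : Type} (f : ℂ → ℂ) (Z : ι → ℂ) (z : ℂ) : ℝ :=
  ‖f z‖ / ∏' i, zfac (Z i) z

/-- Pseudohyperbolic distance `ρ(z,w) = |(z-w)/(1-conj(z)w)|`. -/
def pDist (z w : ℂ) : ℝ := ‖(z - w) / (1 - (starRingEnd ℂ) z * w)‖

/-- Pseudohyperbolic disc `Δ(z,r)`. -/
def pDisc (z : ℂ) (r : ℝ) : Set ℂ := {w : ℂ | ‖w‖ < 1 ∧ pDist z w < r}

/-- A harmonic function on the (simply connected) unit disc,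
characterized as the real part of an analytic function. -/
def HarmonicOnDisc (h : ℂ → ℝ) : Prop :=
  ∃ g : ℂ → ℂ, DifferentiableOn ℂ g uD ∧ ∀ z ∈ uD, h z = (g z).re

/-- `ω̂(r) = ∫_r^1 ω(s) ds` for a radial weight given by its profile `ω : ℝ → ℝ`. -/
def omHat (ω : ℝ → ℝ) (r : ℝ) : ℝ := ∫ s in r..1, ω s

/-- A radial weight (its profile on `[0,1)`) in the class `D̂`. -/
def IsRadialDhat (ω : ℝ → ℝ) : Prop :=
  (∀ s, 0 ≤ ω s) ∧ IntegrableOn ω (Set.Icc 0 1) ∧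
    (∀ r, 0 ≤ r → r < 1 → 0 < omHat ω r) ∧
    ∃ C : ℝ, 1 ≤ C ∧ ∀ r, 0 ≤ r → r < 1 → omHat ω r ≤ C * omHat ω ((1 + r) / 2)

/-- The radial weight on `𝔻` induced by a profile `ω : ℝ → ℝ`. -/
def rad (ω : ℝ → ℝ) : ℂ → ℝ := fun z => ω (‖z‖)

/-- `ω_x = ∫_0^1 s^x ω(s) ds`. -/
def omMom (ω : ℝ → ℝ) (x : ℝ) : ℝ := ∫ s in (0:ℝ)..1, s ^ x * ω s

/-- The reproducing kernel `B^ω_z(ζ) = ∑_{n ≥ 0} (conj(z) ζ)^n / (2 ω_{2n+1})` of `A²_ω`. -/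
def BKer (ω : ℝ → ℝ) (z ζ : ℂ) : ℂ :=
  ∑' n : ℕ, ((starRingEnd ℂ) z * ζ) ^ n / ((2 * omMom ω (2 * n + 1) : ℝ) : ℂ)

/-- `K^ω_z(ζ) = |B^ω_z(ζ)|² / ‖B^ω_z‖²_{A²_ω}`. -/
def KKer (ω : ℝ → ℝ) (z ζ : ℂ) : ℝ :=
  ‖BKer ω z ζ‖ ^ 2 /
    ∫ u in uD, ‖BKer ω z u‖ ^ 2 * ω (‖u‖) ∂dA

/-- `∫⁻_𝔻 |f|^p dμ` (as an extended real). -/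
def muInt (p : ℝ) (μ : Measure ℂ) (f : ℂ → ℂ) : ℝ≥0∞ :=
  ∫⁻ z in uD, ENNReal.ofReal (‖f z‖ ^ p) ∂μ

/-- `μ` is a `p`-Carleson measure for `A^p_ω`. -/
def IsCarleson (p : ℝ) (ω : ℂ → ℝ) (μ : Measure ℂ) : Prop :=
  ∃ C : ℝ, 0 < C ∧ ∀ f : ℂ → ℂ, MemAp p ω f →
    muInt p μ f ≤ ENNReal.ofReal (C * ApPow p ω f)

/-- `μ` is a sampling measure for `A^p_ω`. -/
def IsSampling (p : ℝ) (ω : ℂ → ℝ) (μ : Measure ℂ) : Prop :=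
  ∃ C : ℝ, 0 < C ∧ ∀ f : ℂ → ℂ, MemAp p ω f →
    ENNReal.ofReal (C⁻¹ * ApPow p ω f) ≤ muInt p μ f ∧
      muInt p μ f ≤ ENNReal.ofReal (C * ApPow p ω f)

/-- `G` is a dominating set for `A^p_ω`. -/
def IsDominating (p : ℝ) (ω : ℂ → ℝ) (G : Set ℂ) : Prop :=
  ∃ δ : ℝ, 0 < δ ∧ ∀ f : ℂ → ℂ, MemAp p ω f →
    δ * ApPow p ω f ≤ ∫ z in G, ‖f z‖ ^ p * ω z ∂dA

/-- `‖M_ω(μ)‖_{L^∞} = sup_S μ(S)/ω(S)` over Carleson squares. -/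
def MmaxNorm (ω : ℂ → ℝ) (μ : Measure ℂ) : ℝ :=
  sSup ((fun a => (μ (cSq a)).toReal / wInt ω (cSq a)) ''
    {a : ℂ | a ≠ 0 ∧ ‖a‖ < 1})

/-- The class `C_q`. -/
def MemCq (q : ℝ) (ω : ℂ → ℝ) : Prop :=
  1 < q ∧ AEPos ω ∧ ∃ r : ℝ, 0 < r ∧ r < 1 ∧ ∃ C : ℝ, 0 < C ∧
    ∀ z : ℂ, ‖z‖ < 1 →
      wInt ω (pDisc z r) ^ (1 / q) *
        (∫ u in pDisc z r, ω u ^ (-(1 / (q - 1))) ∂dA) ^ ((q - 1) / q) ≤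
          C * eArea (pDisc z r)

/-- `C_∞ = ⋃_{q>1} C_q`. -/
def MemCinf (ω : ℂ → ℝ) : Prop := ∃ q : ℝ, MemCq q ω

/-- The class `D̂(𝔻)` of (possibly non-radial) weights doubling on Carleson squares. -/
def DhatD (ω : ℂ → ℝ) : Prop :=
  ∃ C : ℝ, 0 < C ∧ ∀ a : ℂ, a ≠ 0 → ‖a‖ < 1 →
    wInt ω (cSq a) ≤
      C * wInt ω (cSq ((((1 + ‖a‖) / 2 : ℝ) : ℂ) * (a / (‖a‖ : ℂ))))

/-- Weak convergence of a sequence of measures against nonnegative continuous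
functions compactly supported in `𝔻`. -/
def WeakConvD (μn : ℕ → Measure ℂ) (μ : Measure ℂ) : Prop :=
  ∀ h : ℂ → ℝ, Continuous h → HasCompactSupport h → tsupport h ⊆ uD → (∀ z, 0 ≤ h z) →
    Tendsto (fun n => ∫ z, h z ∂(μn n)) atTop (nhds (∫ z, h z ∂μ))

/-- The norm of the embedding `Id : A^p_ω → L^p_μ`. -/
def embNorm (p : ℝ) (ω : ℂ → ℝ) (μ : Measure ℂ) : ℝ :=
  sInf {c : ℝ | 0 ≤ c ∧ ∀ f : ℂ → ℂ, MemAp p ω f →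
    muInt p μ f ≤ ENNReal.ofReal (c ^ p * ApPow p ω f)}

/-!
Iterating the doubling inequality of `D̂(𝔻)` along a ray shows that `t ↦ ω(S(t e^{iθ}))` decays
at most like `(1 - t) ^ β` as `t → 1`; this is (ii), and (iii) follows by comparing the radii
`|a|` and `(K + |a|) / (K + 1)`.

For (iv) take `η = β + 1` and enlarge `S(a)` dyadically to squares `S_n` of size `2ⁿ (1 - |a|)`,
up to size about `1/4`. Outside `S_n` one has `|1 - ā z| ≳ 2ⁿ (1 - |a|)`, while
`ω(S_{n+1}) ≲ 2^{nβ} ω(S(a))`, so the rings `S_{n+1} \ S_n` contribute a geometric series.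
Outside the last square the kernel is bounded, and `ω(𝔻)` is controlled by `ω(S(a)) / (1 - |a|)^β`
because positivity of `ω` on finitely many fixed squares bounds the squares of radius `1/2` from
below uniformly in the direction.

Conversely, on `S(a)` the kernel centred at `((1 + |a|) / 2) e^{i arg a}` is
`≳ (1 - |a|) ^ (-η)`, which turns (iv) into the doubling inequality; (ii) and (iii) contain it
directly.
-/

open scoped Real

lemma Real.abs_le_pi_div_two_mul_abs_sin {θ : ℝ} (hθ : |θ| ≤ π / 2) :
    |θ| ≤ π / 2 * |Real.sin θ| := by
  have hθ' : 2 / π * |θ| ≤ |Real.sin θ| := by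
    rcases abs_cases θ with ⟨h, h0⟩ | ⟨h, h0⟩ <;> rw [h] at hθ ⊢
    · exact (Real.mul_le_sin h0 hθ).trans (le_abs_self _)
    · exact (Real.mul_le_sin (by linarith) hθ).trans (by rw [Real.sin_neg]; exact neg_le_abs _)
  have := Real.pi_pos
  calc |θ| = π / 2 * (2 / π * |θ|) := by field_simp
    _ ≤ π / 2 * |Real.sin θ| := by gcongr

namespace Complex

lemma norm_one_sub_conj_mul_comm (c z : ℂ) :
    ‖1 - (starRingEnd ℂ) c * z‖ = ‖1 - c * (starRingEnd ℂ) z‖ := by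
  rw [← norm_conj, map_sub, map_one, map_mul, conj_conj]

lemma one_sub_norm_mul_le (c z : ℂ) : 1 - ‖c‖ * ‖z‖ ≤ ‖1 - (starRingEnd ℂ) c * z‖ := by
  simpa using norm_sub_norm_le (1 : ℂ) ((starRingEnd ℂ) c * z)

/-- `1` is at distance at least `|sin (arg u)|` from the ray through `u`. -/
lemma abs_arg_le_pi_mul_norm_one_sub (u : ℂ) : |arg u| ≤ π * ‖1 - u‖ := by
  rcases le_or_gt 0 u.re with hre | hre
  · have hsq : ‖1 - u‖ ^ 2 = Real.sin (arg u) ^ 2 + (‖u‖ - Real.cos (arg u)) ^ 2 := by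
      rw [← normSq_eq_norm_sq, normSq_apply, sub_re, sub_im, one_re, one_im,
        ← norm_mul_cos_arg, ← norm_mul_sin_arg]
      linear_combination (‖u‖ ^ 2 - 1) * Real.sin_sq_add_cos_sq (arg u)
    have hsin : |Real.sin (arg u)| ≤ ‖1 - u‖ :=
      (sq_le_sq₀ (abs_nonneg _) (norm_nonneg _)).mp (by rw [sq_abs, hsq]; nlinarith)
    calc |arg u| ≤ π / 2 * |Real.sin (arg u)| :=
          Real.abs_le_pi_div_two_mul_abs_sin (abs_arg_le_pi_div_two_iff.mpr hre)
      _ ≤ π * ‖1 - u‖ := by nlinarith [Real.pi_pos, abs_nonneg (Real.sin (arg u))]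
  · have h1 : 1 ≤ ‖1 - u‖ := by
      have := re_le_norm (1 - u); rw [sub_re, one_re] at this; linarith
    nlinarith [abs_arg_le_pi u, Real.pi_pos]

lemma norm_one_sub_le_abs_arg_add {u : ℂ} (hu : ‖u‖ ≤ 1) : ‖1 - u‖ ≤ |arg u| + (1 - ‖u‖) := by
  have he : ‖exp (arg u * I) - 1‖ ≤ |arg u| := by
    simpa [mul_comm] using Real.norm_exp_I_mul_ofReal_sub_one_le (x := arg u)
  have heu : ‖exp (arg u * I) - u‖ = 1 - ‖u‖ := by
    rw [show exp (arg u * I) - u = ((1 - ‖u‖ : ℝ) : ℂ) * exp (arg u * I) by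
        push_cast; linear_combination norm_mul_exp_arg_mul_I u,
      norm_mul, norm_exp_ofReal_mul_I, mul_one, norm_real, Real.norm_of_nonneg (by linarith)]
  calc ‖1 - u‖ ≤ ‖1 - exp (arg u * I)‖ + ‖exp (arg u * I) - u‖ :=
        norm_sub_le_norm_sub_add_norm_sub _ _ _
    _ ≤ |arg u| + (1 - ‖u‖) := by rw [norm_sub_rev, heu]; linarith

lemma abs_arg_mul_le {u v : ℂ} (hu : u ≠ 0) (hv : v ≠ 0) (h : |arg u| + |arg v| < π) :
    |arg (u * v)| ≤ |arg u| + |arg v| := by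
  have hsum := abs_lt.mp ((abs_add_le (arg u) (arg v)).trans_lt h)
  rw [arg_mul hu hv ⟨hsum.1, hsum.2.le⟩]
  exact abs_add_le _ _

/-- The range `|k| ≤ 25` suffices because `8π < 25.5`. -/
lemma exists_abs_arg_mul_conj_exp_le (a : ℂ) :
    ∃ k ∈ Finset.Icc (-25 : ℤ) 25,
      |arg (a * (starRingEnd ℂ) (exp ((k / 8 : ℝ) * I)))| ≤ 1 / 16 := by
  rcases eq_or_ne a 0 with rfl | ha
  · exact ⟨0, by simp, by simp⟩
  set k := round (8 * arg a)
  have hround := abs_le.mp (abs_sub_round (8 * arg a) : |8 * arg a - k| ≤ 1 / 2)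
  have harg := abs_le.mp (abs_arg_le_pi a)
  have hδ : |arg a - k / 8| ≤ 1 / 16 := abs_le.mpr ⟨by linarith, by linarith⟩
  have hprod : a * (starRingEnd ℂ) (exp ((k / 8 : ℝ) * I)) =
      ‖a‖ * exp ((arg a - k / 8 : ℝ) * I) := by
    rw [← exp_conj, map_mul, conj_ofReal, conj_I]
    conv_lhs => rw [← norm_mul_exp_arg_mul_I a]
    rw [mul_assoc, ← exp_add]; push_cast; ring_nf
  refine ⟨k, Finset.mem_Icc.mpr ?_, ?_⟩
  · have hk1 : (k : ℝ) < 26 := by linarith [Real.pi_lt_d2]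
    have hk2 : (-26 : ℝ) < k := by linarith [Real.pi_lt_d2]
    have : k < 26 := by exact_mod_cast hk1
    have : -26 < k := by exact_mod_cast hk2
    omega
  · have hδπ := abs_le.mp hδ
    rwa [hprod, arg_real_mul _ (norm_pos_iff.mpr ha), exp_mul_I,
      arg_cos_add_sin_mul_I ⟨by linarith [Real.pi_gt_three], by linarith [Real.pi_gt_three]⟩]

end Complex

section Doubling

variable {f : ℝ → ℝ} {C : ℝ}

lemma le_pow_mul_of_doubling (hC : 0 ≤ C) (hf : ∀ t ∈ Ioo (0 : ℝ) 1, f t ≤ C * f ((1 + t) / 2))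
    (n : ℕ) : ∀ t ∈ Ioo (0 : ℝ) 1, f t ≤ C ^ n * f (1 - (1 - t) / 2 ^ n) := by
  induction n with
  | zero => intro t _; simp
  | succ n ih =>
    rintro t ⟨ht0, ht1⟩
    calc f t ≤ C * f ((1 + t) / 2) := hf t ⟨ht0, ht1⟩
      _ ≤ C * (C ^ n * f (1 - (1 - (1 + t) / 2) / 2 ^ n)) :=
        mul_le_mul_of_nonneg_left (ih _ ⟨by linarith, by linarith⟩) hC
      _ = C ^ (n + 1) * f (1 - (1 - t) / 2 ^ (n + 1)) := by
        rw [pow_succ', mul_assoc]; congr 3; ring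

lemma le_rpow_mul_of_doubling {β : ℝ} (hβ : 0 ≤ β) (hC : 0 ≤ C) (hCβ : C ≤ 2 ^ β)
    (hf0 : ∀ t ∈ Ioo (0 : ℝ) 1, 0 ≤ f t) (hanti : AntitoneOn f (Ioo 0 1))
    (hf : ∀ t ∈ Ioo (0 : ℝ) 1, f t ≤ C * f ((1 + t) / 2)) {t t' : ℝ} (ht : 0 < t)
    (htt' : t ≤ t') (ht' : t' < 1) :
    f t ≤ (2 * ((1 - t) / (1 - t'))) ^ β * f t' := by
  have h1t' : 0 < 1 - t' := by linarith
  obtain ⟨n, hnx, hxn⟩ := exists_nat_pow_near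
    ((one_le_div h1t').mpr (by linarith) : 1 ≤ (1 - t) / (1 - t')) one_lt_two
  set s := 1 - (1 - t) / 2 ^ (n + 1)
  have hts : t' ≤ s := by
    have : (1 - t) / 2 ^ (n + 1) ≤ 1 - t' := by
      rw [div_le_iff₀ (by positivity), mul_comm, ← div_le_iff₀ h1t']; exact hxn.le
    linarith
  have hs1 : s < 1 := by
    have : 0 < (1 - t) / 2 ^ (n + 1) := div_pos (by linarith) (by positivity)
    linarith
  have hpow : C ^ (n + 1) ≤ (2 * ((1 - t) / (1 - t'))) ^ β :=
    calc C ^ (n + 1) ≤ ((2 : ℝ) ^ β) ^ (n + 1) := pow_le_pow_left₀ hC hCβ _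
      _ = ((2 : ℝ) ^ (n + 1)) ^ β := by
        rw [← Real.rpow_natCast, ← Real.rpow_natCast, ← Real.rpow_mul zero_le_two,
          ← Real.rpow_mul zero_le_two, mul_comm]
      _ ≤ (2 * ((1 - t) / (1 - t'))) ^ β := by
        gcongr; rw [pow_succ']; exact mul_le_mul_of_nonneg_left hnx zero_le_two
  calc f t ≤ C ^ (n + 1) * f s := le_pow_mul_of_doubling hC hf (n + 1) t ⟨ht, by linarith⟩
    _ ≤ C ^ (n + 1) * f t' :=
      mul_le_mul_of_nonneg_left (hanti ⟨by linarith, ht'⟩ ⟨by linarith, hs1⟩ hts) (by positivity)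
    _ ≤ (2 * ((1 - t) / (1 - t'))) ^ β * f t' :=
      mul_le_mul_of_nonneg_right hpow (hf0 t' ⟨by linarith, ht'⟩)

end Doubling

lemma exists_two_pow_mul_mem_Ico {s : ℝ} (hs : 0 < s) (hs1 : s < 1) :
    ∃ N : ℕ, 1 / 4 ≤ 2 ^ N * s ∧ 2 ^ N * s < 1 := by
  have hex : ∃ n : ℕ, 1 / 4 ≤ 2 ^ n * s := by
    obtain ⟨n, hn⟩ := pow_unbounded_of_one_lt (1 / 4 / s) one_lt_two
    exact ⟨n, ((div_lt_iff₀ hs).mp hn).le⟩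
  refine ⟨Nat.find hex, Nat.find_spec hex, ?_⟩
  rcases Nat.eq_zero_or_pos (Nat.find hex) with h0 | h0
  · rwa [h0, pow_zero, one_mul]
  · have hmin := not_le.mp (Nat.find_min hex (Nat.sub_one_lt_of_lt h0))
    rw [← Nat.sub_one_add_one h0.ne', pow_succ]
    linarith

lemma MeasureTheory.setIntegral_eq_add_sum_diff {α E : Type*} [MeasurableSpace α]
    [NormedAddCommGroup E] [NormedSpace ℝ E] {μ : Measure α} {f : α → E} {T : ℕ → Set α}
    (hT : ∀ n, MeasurableSet (T n)) {N : ℕ} (hmono : ∀ n < N, T n ⊆ T (n + 1))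
    (hf : IntegrableOn f (T N) μ) :
    ∫ x in T N, f x ∂μ =
      ∫ x in T 0, f x ∂μ + ∑ n ∈ Finset.range N, ∫ x in T (n + 1) \ T n, f x ∂μ := by
  induction N with
  | zero => simp
  | succ N ih =>
    have hsub := hmono N N.lt_succ_self
    rw [Finset.sum_range_succ, ← add_assoc,
      ← ih (fun n hn => hmono n (hn.trans N.lt_succ_self)) (hf.mono_set hsub),
      ← setIntegral_union disjoint_sdiff_right ((hT _).diff (hT _)) (hf.mono_set hsub)
        (hf.mono_set sdiff_subset), union_sdiff_cancel hsub]

lemma mem_uD_iff {z : ℂ} : z ∈ uD ↔ ‖z‖ < 1 := mem_ball_zero_iff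

lemma measurableSet_uD : MeasurableSet uD := measurableSet_ball

lemma cSq_subset_uD (a : ℂ) : cSq a ⊆ uD := fun _ hw => mem_uD_iff.mpr hw.2.1

lemma measurableSet_cSq (a : ℂ) : MeasurableSet (cSq a) := by
  have hnorm : Measurable fun w : ℂ => ‖w‖ := measurable_norm
  have harg : Measurable fun w : ℂ => |arg (a * (starRingEnd ℂ) w)| :=
    (measurable_arg.comp (measurable_const.mul Complex.continuous_conj.measurable)).abs
  exact (measurableSet_lt measurable_const hnorm).inter
    ((measurableSet_lt hnorm measurable_const).inter (measurableSet_lt harg measurable_const))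

/-- `t e^{i arg a}`, in the form in which `DhatD` and statement (iii) write it. -/
def radialPoint (a : ℂ) (t : ℝ) : ℂ := (t : ℂ) * (a / (‖a‖ : ℂ))

section RadialPoint

variable {a : ℂ}

lemma radialPoint_eq_mul (ha : a ≠ 0) (t : ℝ) :
    radialPoint a t = ((t / ‖a‖ : ℝ) : ℂ) * a := by
  have : (‖a‖ : ℂ) ≠ 0 := by simpa using ha
  rw [radialPoint]; push_cast; field_simp

lemma norm_radialPoint (ha : a ≠ 0) {t : ℝ} (ht : 0 ≤ t) : ‖radialPoint a t‖ = t := by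
  rw [radialPoint_eq_mul ha, norm_mul, norm_real, Real.norm_of_nonneg (by positivity),
    div_mul_cancel₀ _ (norm_ne_zero_iff.mpr ha)]

lemma radialPoint_ne_zero (ha : a ≠ 0) {t : ℝ} (ht : 0 < t) : radialPoint a t ≠ 0 := by
  rw [← norm_pos_iff, norm_radialPoint ha ht.le]; exact ht

lemma radialPoint_norm_self (ha : a ≠ 0) : radialPoint a ‖a‖ = a := by
  rw [radialPoint_eq_mul ha, div_self (norm_ne_zero_iff.mpr ha), ofReal_one, one_mul]

lemma radialPoint_radialPoint (ha : a ≠ 0) {t : ℝ} (ht : 0 < t) (s : ℝ) :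
    radialPoint (radialPoint a t) s = radialPoint a s := by
  have hat := radialPoint_ne_zero ha ht
  rw [radialPoint_eq_mul hat, norm_radialPoint ha ht.le, radialPoint_eq_mul ha,
    radialPoint_eq_mul ha, ← mul_assoc, ← ofReal_mul]
  congr 2
  field_simp

lemma arg_radialPoint_mul (ha : a ≠ 0) {t : ℝ} (ht : 0 < t) (w : ℂ) :
    arg (radialPoint a t * w) = arg (a * w) := by
  rw [radialPoint_eq_mul ha, mul_assoc, arg_real_mul _ (div_pos ht (norm_pos_iff.mpr ha))]

lemma arg_radialPoint (ha : a ≠ 0) {t : ℝ} (ht : 0 < t) : arg (radialPoint a t) = arg a := by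
  simpa using arg_radialPoint_mul ha ht 1

lemma eq_radialPoint_of_arg_eq {a' : ℂ} (ha : a ≠ 0) (h : arg a = arg a') :
    a' = radialPoint a ‖a'‖ := by
  rcases eq_or_ne a' 0 with rfl | ha'
  · simp [radialPoint]
  have hdir : a / (‖a‖ : ℂ) = exp (arg a * I) := by
    rw [div_eq_iff (by simpa using ha), mul_comm, norm_mul_exp_arg_mul_I]
  rw [radialPoint, hdir, h, norm_mul_exp_arg_mul_I]

lemma cSq_radialPoint (ha : a ≠ 0) {t : ℝ} (ht : 0 < t) :
    cSq (radialPoint a t) =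
      {w : ℂ | t < ‖w‖ ∧ ‖w‖ < 1 ∧ |arg (a * (starRingEnd ℂ) w)| < (1 - t) / 2} := by
  ext w
  simp only [cSq, mem_ofPred_eq, norm_radialPoint ha ht.le, arg_radialPoint_mul ha ht]

lemma cSq_radialPoint_anti (ha : a ≠ 0) {t t' : ℝ} (ht : 0 < t) (htt' : t ≤ t') :
    cSq (radialPoint a t') ⊆ cSq (radialPoint a t) := by
  rw [cSq_radialPoint ha ht, cSq_radialPoint ha (ht.trans_le htt')]
  exact fun w ⟨h1, h2, h3⟩ => ⟨htt'.trans_lt h1, h2, h3.trans_le (by linarith)⟩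

end RadialPoint

lemma cSq_radialPoint_subset {a b : ℂ} (ha : a ≠ 0) (hb : b ≠ 0) {s s' : ℝ} (hs : 0 < s)
    (hss' : s ≤ s') (harg : |arg (a * (starRingEnd ℂ) b)| + (1 - s') / 2 ≤ (1 - s) / 2) :
    cSq (radialPoint b s') ⊆ cSq (radialPoint a s) := by
  rw [cSq_radialPoint ha hs, cSq_radialPoint hb (hs.trans_le hss')]
  rintro w ⟨hw1, hw2, hw3⟩
  have hw0 : w ≠ 0 := norm_pos_iff.mp (by linarith)
  refine ⟨hss'.trans_lt hw1, hw2, ?_⟩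
  have hprod : a * (starRingEnd ℂ) b * (b * (starRingEnd ℂ) w) =
      ((‖b‖ ^ 2 : ℝ) : ℂ) * (a * (starRingEnd ℂ) w) := by
    rw [ofReal_pow, ← mul_conj']; ring
  have hmul := abs_arg_mul_le (mul_ne_zero ha ((map_ne_zero _).mpr hb))
    (mul_ne_zero hb ((map_ne_zero _).mpr hw0)) (by linarith [Real.pi_gt_three])
  rw [hprod, arg_real_mul _ (by positivity)] at hmul
  linarith

lemma le_norm_one_sub_conj_mul_of_notMem_cSq {a z : ℂ} (ha : a ≠ 0) (ha1 : ‖a‖ ≤ 1) {s : ℝ}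
    (hs : 0 < s) (hs1 : s ≤ 1) (hz : ‖z‖ < 1) (hzs : z ∉ cSq (radialPoint a s)) :
    (1 - s) / (2 * π) ≤ ‖1 - (starRingEnd ℂ) a * z‖ := by
  rw [cSq_radialPoint ha hs] at hzs
  simp only [mem_ofPred_eq, not_and, not_lt] at hzs
  have := Real.pi_gt_three
  rcases le_or_gt ‖z‖ s with hzs' | hzs'
  · calc (1 - s) / (2 * π) ≤ 1 - s := div_le_self (by linarith) (by linarith)
      _ ≤ 1 - ‖a‖ * ‖z‖ := by nlinarith [norm_nonneg a, norm_nonneg z]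
      _ ≤ _ := one_sub_norm_mul_le a z
  · have harg := abs_arg_le_pi_mul_norm_one_sub (a * (starRingEnd ℂ) z)
    rw [← norm_one_sub_conj_mul_comm] at harg
    rw [div_le_iff₀ (by positivity)]
    linarith [hzs hzs' hz]

lemma norm_one_sub_conj_mul_le_of_mem_cSq {a z : ℂ} (ha : a ≠ 0) (hz : z ∈ cSq a) :
    ‖1 - (starRingEnd ℂ) (radialPoint a ((1 + ‖a‖) / 2)) * z‖ ≤ 2 * (1 - ‖a‖) := by
  obtain ⟨hz1, hz2, hz3⟩ := hz
  have ht : 0 < ‖a‖ := norm_pos_iff.mpr ha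
  have hu : ‖radialPoint a ((1 + ‖a‖) / 2) * (starRingEnd ℂ) z‖ = (1 + ‖a‖) / 2 * ‖z‖ := by
    rw [norm_mul, norm_conj, norm_radialPoint ha (by positivity)]
  rw [norm_one_sub_conj_mul_comm]
  refine (norm_one_sub_le_abs_arg_add (by rw [hu]; nlinarith)).trans ?_
  rw [arg_radialPoint_mul ha (by positivity), hu]
  nlinarith

section Weight

variable {ω : ℂ → ℝ}

lemma IsWeight.integrableOn (hw : IsWeight ω) {s : Set ℂ} (hs : s ⊆ uD) :
    IntegrableOn ω s dA :=
  hw.2.mono_set hs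

lemma IsWeight.wInt_nonneg (hw : IsWeight ω) (s : Set ℂ) : 0 ≤ wInt ω s :=
  integral_nonneg hw.1

lemma IsWeight.wInt_mono (hw : IsWeight ω) {s t : Set ℂ} (hst : s ⊆ t) (ht : t ⊆ uD) :
    wInt ω s ≤ wInt ω t :=
  setIntegral_mono_set (hw.integrableOn ht) (.of_forall hw.1) hst.eventuallyLE

lemma setIntegral_div_rpow_le (hw : IsWeight ω) {s : Set ℂ} (hs : s ⊆ uD) {d : ℂ → ℝ}
    {c η : ℝ} (hc : 0 < c) (hη : 0 ≤ η) (hd : ∀ z ∈ s, c ≤ d z) :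
    ∫ z in s, ω z / d z ^ η ∂dA ≤ (c ^ η)⁻¹ * wInt ω s := by
  rw [wInt, ← integral_const_mul]
  refine setIntegral_mono_of_nonneg
    (fun z hz => div_nonneg (hw.1 z) (Real.rpow_nonneg (hc.le.trans (hd z hz)) η))
    (fun z hz => ?_) ((hw.integrableOn hs).const_mul _)
  rw [div_eq_inv_mul]
  exact mul_le_mul_of_nonneg_right
    (inv_anti₀ (by positivity) (Real.rpow_le_rpow hc.le (hd z hz) hη)) (hw.1 z)

lemma wInt_le_rpow_mul_setIntegral (hw : IsWeight ω) {s : Set ℂ} {d : ℂ → ℝ} {c η : ℝ}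
    (hη : 0 ≤ η) (hd : ∀ z ∈ s, 0 < d z ∧ d z ≤ c)
    (hint : IntegrableOn (fun z => ω z / d z ^ η) s dA) :
    wInt ω s ≤ c ^ η * ∫ z in s, ω z / d z ^ η ∂dA := by
  rw [wInt, ← integral_const_mul]
  refine setIntegral_mono_of_nonneg (fun z _ => hw.1 z) (fun z hz => ?_) (hint.const_mul _)
  obtain ⟨hd0, hdc⟩ := hd z hz
  have hpos : 0 < d z ^ η := Real.rpow_pos_of_pos hd0 η
  calc ω z = d z ^ η * (ω z / d z ^ η) := by field_simp
    _ ≤ c ^ η * (ω z / d z ^ η) := mul_le_mul_of_nonneg_right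
      (Real.rpow_le_rpow hd0.le hdc hη) (div_nonneg (hw.1 z) hpos.le)

lemma integrableOn_div_rpow (hw : IsWeight ω) {c : ℂ} (hc : ‖c‖ < 1) {η : ℝ} (hη : 0 ≤ η) :
    IntegrableOn (fun z => ω z / ‖1 - (starRingEnd ℂ) c * z‖ ^ η) uD dA := by
  have hlb : ∀ z ∈ uD, 1 - ‖c‖ ≤ ‖1 - (starRingEnd ℂ) c * z‖ := fun z hz =>
    (one_sub_norm_mul_le c z).trans' (by nlinarith [mem_uD_iff.mp hz, norm_nonneg c, norm_nonneg z])
  have hker : Measurable fun z : ℂ => ‖1 - (starRingEnd ℂ) c * z‖ ^ η := by fun_prop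
  refine Integrable.mono' (hw.2.const_mul ((1 - ‖c‖) ^ η)⁻¹)
    (hw.2.aemeasurable.div hker.aemeasurable).aestronglyMeasurable
    ((ae_restrict_iff' measurableSet_uD).mpr (.of_forall fun z hz => ?_))
  have hk : (1 - ‖c‖) ^ η ≤ ‖1 - (starRingEnd ℂ) c * z‖ ^ η :=
    Real.rpow_le_rpow (by linarith) (hlb z hz) hη
  rw [Real.norm_of_nonneg (div_nonneg (hw.1 z) (by positivity)), div_eq_inv_mul]
  exact mul_le_mul_of_nonneg_right (inv_anti₀ (by apply Real.rpow_pos_of_pos; linarith) hk)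
    (hw.1 z)

lemma setIntegral_uD_diff_cSq_le (hw : IsWeight ω) {a : ℂ} (ha : a ≠ 0) (ha1 : ‖a‖ < 1)
    {s η : ℝ} (hs : 0 < s) (hs1 : s ≤ 3 / 4) (hη : 0 ≤ η) :
    ∫ z in uD \ cSq (radialPoint a s), ω z / ‖1 - (starRingEnd ℂ) a * z‖ ^ η ∂dA ≤
      (8 * π) ^ η * wInt ω uD := by
  have hπ := Real.pi_pos
  have hs' : 1 / (8 * π) ≤ (1 - s) / (2 * π) := by
    rw [div_le_div_iff₀ (by positivity) (by positivity)]; nlinarith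
  have hker : ∀ z ∈ uD \ cSq (radialPoint a s), 1 / (8 * π) ≤ ‖1 - (starRingEnd ℂ) a * z‖ :=
    fun z hz => hs'.trans (le_norm_one_sub_conj_mul_of_notMem_cSq ha ha1.le hs (by linarith)
      (mem_uD_iff.mp hz.1) hz.2)
  refine (setIntegral_div_rpow_le hw sdiff_subset (by positivity) hη hker).trans ?_
  rw [one_div, Real.inv_rpow (by positivity), inv_inv]
  exact mul_le_mul_of_nonneg_left (hw.wInt_mono sdiff_subset subset_rfl) (by positivity)

lemma exists_pos_le_wInt_cSq_half (hw : IsWeight ω)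
    (hpos : ∀ a : ℂ, a ≠ 0 → ‖a‖ < 1 → 0 < wInt ω (cSq a)) :
    ∃ m : ℝ, 0 < m ∧ ∀ a : ℂ, a ≠ 0 → m ≤ wInt ω (cSq (radialPoint a (1 / 2))) := by
  have hb : ∀ k : ℤ, exp ((k / 8 : ℝ) * I) ≠ 0 := fun k => exp_ne_zero _
  obtain ⟨k₀, -, hk₀⟩ := (Finset.Icc (-25 : ℤ) 25).exists_min_image
    (fun k => wInt ω (cSq (radialPoint (exp ((k / 8 : ℝ) * I)) (3 / 4)))) ⟨0, by simp⟩
  refine ⟨_, hpos _ (radialPoint_ne_zero (hb k₀) (by norm_num : (0 : ℝ) < 3 / 4))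
    (by rw [norm_radialPoint (hb k₀) (by norm_num)]; norm_num), fun a ha => ?_⟩
  obtain ⟨k, hk, harg⟩ := exists_abs_arg_mul_conj_exp_le a
  exact (hk₀ k hk).trans (hw.wInt_mono
    (cSq_radialPoint_subset (s := 1 / 2) (s' := 3 / 4) ha (hb k) (by norm_num) (by norm_num)
      (by linarith))
    (cSq_subset_uD _))

/-- Statement (ii) of the theorem along the ray through `a`, in multiplicative form. -/
def RayPowerBound (ω : ℂ → ℝ) (β : ℝ) : Prop :=
  ∀ a : ℂ, a ≠ 0 → ∀ t t' : ℝ, 0 < t → t ≤ t' → t' < 1 →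
    wInt ω (cSq (radialPoint a t)) ≤
      (2 * ((1 - t) / (1 - t'))) ^ β * wInt ω (cSq (radialPoint a t'))

lemma DhatD.exists_rayPowerBound (hw : IsWeight ω) (h : DhatD ω) :
    ∃ β, 0 < β ∧ RayPowerBound ω β := by
  obtain ⟨C, hC, hD⟩ := h
  have h2β : (2 : ℝ) ^ Real.logb 2 (max C 2) = max C 2 :=
    Real.rpow_logb two_pos (by norm_num) (by positivity)
  refine ⟨Real.logb 2 (max C 2), Real.logb_pos one_lt_two (by simp), ?_⟩
  intro a ha t t' ht htt' ht'
  refine le_rpow_mul_of_doubling (f := fun t => wInt ω (cSq (radialPoint a t)))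
    (Real.logb_pos one_lt_two (by simp)).le hC.le (h2β.symm ▸ le_max_left C 2)
    (fun _ _ => hw.wInt_nonneg _)
    (fun s hs s' _ hss' => hw.wInt_mono (cSq_radialPoint_anti ha hs.1 hss') (cSq_subset_uD _))
    (fun s ⟨hs0, hs1⟩ => ?_) ht htt' ht'
  have hb := radialPoint_ne_zero ha hs0
  have hdbl : wInt ω (cSq (radialPoint a s)) ≤ C * wInt ω (cSq (radialPoint (radialPoint a s)
      ((1 + ‖radialPoint a s‖) / 2))) := hD _ hb (by rwa [norm_radialPoint ha hs0.le])
  rwa [radialPoint_radialPoint ha hs0, norm_radialPoint ha hs0.le] at hdbl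

lemma RayPowerBound.div_rpow_le {β : ℝ} (h : RayPowerBound ω β) :
    ∀ a a' : ℂ, a ≠ 0 → ‖a‖ ≤ ‖a'‖ → ‖a'‖ < 1 → arg a = arg a' →
      wInt ω (cSq a) / (1 - ‖a‖) ^ β ≤ 2 ^ β * (wInt ω (cSq a') / (1 - ‖a'‖) ^ β) := by
  intro a a' ha hle hlt harg
  have h1t : 0 < 1 - ‖a‖ := by linarith
  have h1t' : 0 < 1 - ‖a'‖ := by linarith
  have hray := h a ha ‖a‖ ‖a'‖ (norm_pos_iff.mpr ha) hle hlt
  rw [radialPoint_norm_self ha, ← eq_radialPoint_of_arg_eq ha harg,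
    Real.mul_rpow zero_le_two (by positivity), Real.div_rpow h1t.le h1t'.le] at hray
  rw [div_le_iff₀ (by positivity)]
  exact hray.trans_eq (by field_simp)

lemma DhatD.of_div_rpow_le (h : ∃ β C : ℝ, 0 < β ∧ 1 ≤ C ∧ ∀ a a' : ℂ, a ≠ 0 →
      ‖a‖ ≤ ‖a'‖ → ‖a'‖ < 1 → arg a = arg a' →
      wInt ω (cSq a) / (1 - ‖a‖) ^ β ≤ C * (wInt ω (cSq a') / (1 - ‖a'‖) ^ β)) :
    DhatD ω := by
  obtain ⟨β, C, -, hC, h⟩ := h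
  refine ⟨C * 2 ^ β, by positivity, fun a ha ha1 => ?_⟩
  have ht : 0 < ‖a‖ := norm_pos_iff.mpr ha
  have h1t : 0 < 1 - ‖a‖ := by linarith
  change _ ≤ _ * wInt ω (cSq (radialPoint a _))
  have hb := h a (radialPoint a ((1 + ‖a‖) / 2)) ha
    (by rw [norm_radialPoint ha (by positivity)]; linarith)
    (by rw [norm_radialPoint ha (by positivity)]; linarith)
    (arg_radialPoint ha (by positivity)).symm
  rw [norm_radialPoint ha (by positivity), show 1 - (1 + ‖a‖) / 2 = (1 - ‖a‖) / 2 by ring,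
    Real.div_rpow h1t.le zero_le_two, div_le_iff₀ (by positivity)] at hb
  exact hb.trans_eq (by field_simp)

lemma RayPowerBound.le_mul_wInt_cSq {β : ℝ} (h : RayPowerBound ω β) {K : ℝ} (hK : 0 < K) :
    ∃ C : ℝ, 0 < C ∧ ∀ a : ℂ, a ≠ 0 → ‖a‖ < 1 →
      wInt ω (cSq a) ≤ C * wInt ω (cSq ((((K + ‖a‖) / (K + 1) : ℝ) : ℂ) * (a / (‖a‖ : ℂ)))) := by
  refine ⟨(2 * (K + 1)) ^ β, by positivity, fun a ha ha1 => ?_⟩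
  have ht : 0 < ‖a‖ := norm_pos_iff.mpr ha
  have hray := h a ha ‖a‖ ((K + ‖a‖) / (K + 1)) ht
    (by rw [le_div_iff₀ (by positivity)]; nlinarith)
    (by rw [div_lt_one (by positivity)]; linarith)
  have hratio : (1 - ‖a‖) / (1 - (K + ‖a‖) / (K + 1)) = K + 1 := by
    rw [show 1 - (K + ‖a‖) / (K + 1) = (1 - ‖a‖) / (K + 1) by field_simp; ring,
      div_div_cancel₀ (by linarith)]
  rwa [radialPoint_norm_self ha, hratio] at hray

lemma DhatD.of_le_mul_wInt_cSq (h : ∀ K : ℝ, 0 < K → ∃ C : ℝ, 0 < C ∧ ∀ a : ℂ, a ≠ 0 → ‖a‖ < 1 →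
      wInt ω (cSq a) ≤ C * wInt ω (cSq ((((K + ‖a‖) / (K + 1) : ℝ) : ℂ) * (a / (‖a‖ : ℂ))))) :
    DhatD ω := by
  obtain ⟨C, hC, h⟩ := h 1 one_pos
  exact ⟨C, hC, fun a ha ha1 => by simpa [one_add_one_eq_two] using h a ha ha1⟩

lemma RayPowerBound.wInt_cSq_half_le {β : ℝ} (h : RayPowerBound ω β) (hw : IsWeight ω)
    (hβ : 0 ≤ β) {a : ℂ} (ha : a ≠ 0) (ha1 : ‖a‖ < 1) :
    wInt ω (cSq (radialPoint a (1 / 2))) ≤ wInt ω (cSq a) / (1 - ‖a‖) ^ β := by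
  have h1t : 0 < 1 - ‖a‖ := by linarith
  rcases le_or_gt ‖a‖ (1 / 2) with hle | hlt
  · calc wInt ω (cSq (radialPoint a (1 / 2))) ≤ wInt ω (cSq a) := by
          conv_rhs => rw [← radialPoint_norm_self ha]
          exact hw.wInt_mono (cSq_radialPoint_anti ha (norm_pos_iff.mpr ha) hle) (cSq_subset_uD _)
      _ ≤ wInt ω (cSq a) / (1 - ‖a‖) ^ β := le_div_self (hw.wInt_nonneg _) (by positivity)
          (Real.rpow_le_one h1t.le (by linarith [norm_nonneg a]) hβ)
  · have hray := h a ha (1 / 2) ‖a‖ one_half_pos hlt.le ha1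
    rwa [radialPoint_norm_self ha, show 2 * ((1 - 1 / 2) / (1 - ‖a‖)) = 1 / (1 - ‖a‖) by ring,
      Real.div_rpow zero_le_one h1t.le, Real.one_rpow, one_div_mul_eq_div] at hray

lemma RayPowerBound.exists_wInt_uD_le {β : ℝ} (h : RayPowerBound ω β) (hw : IsWeight ω)
    (hβ : 0 ≤ β) (hpos : ∀ a : ℂ, a ≠ 0 → ‖a‖ < 1 → 0 < wInt ω (cSq a)) :
    ∃ K : ℝ, 0 ≤ K ∧ ∀ a : ℂ, a ≠ 0 → ‖a‖ < 1 →
      wInt ω uD ≤ K * (wInt ω (cSq a) / (1 - ‖a‖) ^ β) := by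
  obtain ⟨m, hm, hmle⟩ := exists_pos_le_wInt_cSq_half hw hpos
  have hK : 0 ≤ wInt ω uD / m := div_nonneg (hw.wInt_nonneg _) hm.le
  refine ⟨wInt ω uD / m, hK, fun a ha ha1 => ?_⟩
  calc wInt ω uD = wInt ω uD / m * m := by field_simp
    _ ≤ wInt ω uD / m * (wInt ω (cSq a) / (1 - ‖a‖) ^ β) :=
      mul_le_mul_of_nonneg_left ((hmle a ha).trans (h.wInt_cSq_half_le hw hβ ha ha1)) hK

lemma RayPowerBound.setIntegral_cSq_diff_le {β : ℝ} (h : RayPowerBound ω β) (hw : IsWeight ω)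
    (hβ : 0 ≤ β) {a : ℂ} (ha : a ≠ 0) (ha1 : ‖a‖ < 1) {l : ℝ} (hl : 1 - ‖a‖ ≤ l)
    (hl1 : 2 * l < 1) :
    ∫ z in cSq (radialPoint a (1 - 2 * l)) \ cSq (radialPoint a (1 - l)),
        ω z / ‖1 - (starRingEnd ℂ) a * z‖ ^ (β + 1) ∂dA ≤
      (2 * π) ^ (β + 1) * 4 ^ β * ((1 - ‖a‖) / l) *
        (wInt ω (cSq a) / (1 - ‖a‖) ^ (β + 1)) := by
  have hπ := Real.pi_pos
  have h1t : 0 < 1 - ‖a‖ := by linarith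
  have hl0 : 0 < l := h1t.trans_le hl
  have hker : ∀ z ∈ cSq (radialPoint a (1 - 2 * l)) \ cSq (radialPoint a (1 - l)),
      l / (2 * π) ≤ ‖1 - (starRingEnd ℂ) a * z‖ := fun z hz => by
    simpa using le_norm_one_sub_conj_mul_of_notMem_cSq ha ha1.le (s := 1 - l) (by linarith)
      (by linarith) hz.1.2.1 hz.2
  have hray := h a ha (1 - 2 * l) ‖a‖ (by linarith) (by linarith) ha1
  rw [radialPoint_norm_self ha, sub_sub_cancel] at hray
  calc _ ≤ ((l / (2 * π)) ^ (β + 1))⁻¹ *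
        wInt ω (cSq (radialPoint a (1 - 2 * l)) \ cSq (radialPoint a (1 - l))) :=
        setIntegral_div_rpow_le hw (sdiff_subset.trans (cSq_subset_uD _)) (by positivity)
          (by linarith) hker
    _ ≤ ((l / (2 * π)) ^ (β + 1))⁻¹ *
        ((2 * (2 * l / (1 - ‖a‖))) ^ β * wInt ω (cSq a)) := by
        gcongr
        exact (hw.wInt_mono sdiff_subset (cSq_subset_uD _)).trans hray
    _ = _ := by
        rw [show 2 * (2 * l / (1 - ‖a‖)) = 4 * l / (1 - ‖a‖) by ring,
          Real.div_rpow (by positivity) h1t.le, Real.mul_rpow (by norm_num) hl0.le,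
          Real.div_rpow hl0.le (by positivity), Real.rpow_add_one hl0.ne',
          Real.rpow_add_one (by positivity), Real.rpow_add_one h1t.ne']
        field_simp

lemma RayPowerBound.setIntegral_cSq_le {β : ℝ} (h : RayPowerBound ω β) (hw : IsWeight ω)
    (hβ : 0 ≤ β) {a : ℂ} (ha : a ≠ 0) (ha1 : ‖a‖ < 1) {N : ℕ}
    (hN : 2 ^ N * (1 - ‖a‖) < 1) :
    ∫ z in cSq (radialPoint a (1 - 2 ^ N * (1 - ‖a‖))),
        ω z / ‖1 - (starRingEnd ℂ) a * z‖ ^ (β + 1) ∂dA ≤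
      (1 + 2 * ((2 * π) ^ (β + 1) * 4 ^ β)) * (wInt ω (cSq a) / (1 - ‖a‖) ^ (β + 1)) := by
  set l₀ := 1 - ‖a‖
  have hl₀ : 0 < l₀ := by linarith
  set B := wInt ω (cSq a) / l₀ ^ (β + 1)
  set c := (2 * π) ^ (β + 1) * 4 ^ β
  have hsize : ∀ n ≤ N, 2 ^ n * l₀ < 1 := fun n hn =>
    (mul_le_mul_of_nonneg_right (pow_le_pow_right₀ one_le_two hn) hl₀.le).trans_lt hN
  have hchain := setIntegral_eq_add_sum_diff (T := fun n => cSq (radialPoint a (1 - 2 ^ n * l₀)))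
    (μ := dA) (f := fun z => ω z / ‖1 - (starRingEnd ℂ) a * z‖ ^ (β + 1))
    (fun _ => measurableSet_cSq _)
    (fun n hn => cSq_radialPoint_anti ha (by linarith [hsize (n + 1) hn])
      (by rw [pow_succ]; nlinarith [pow_pos (two_pos : (0 : ℝ) < 2) n]))
    ((integrableOn_div_rpow hw ha1 (by linarith)).mono_set (cSq_subset_uD _))
  have hcore : ∫ z in cSq a, ω z / ‖1 - (starRingEnd ℂ) a * z‖ ^ (β + 1) ∂dA ≤ B := by
    refine (setIntegral_div_rpow_le hw (cSq_subset_uD a) hl₀ (by linarith)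
      fun z hz => (one_sub_norm_mul_le a z).trans' ?_).trans_eq (inv_mul_eq_div _ _)
    nlinarith [hz.2.1, norm_nonneg a]
  have hann : ∀ n ∈ Finset.range N,
      ∫ z in cSq (radialPoint a (1 - 2 ^ (n + 1) * l₀)) \ cSq (radialPoint a (1 - 2 ^ n * l₀)),
        ω z / ‖1 - (starRingEnd ℂ) a * z‖ ^ (β + 1) ∂dA ≤ c * (1 / 2) ^ n * B := by
    intro n hn
    have hann := h.setIntegral_cSq_diff_le hw hβ ha ha1 (l := 2 ^ n * l₀)
      (le_mul_of_one_le_left hl₀.le (one_le_pow₀ one_le_two))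
      (by rw [← mul_assoc, ← pow_succ']; exact hsize (n + 1) (Finset.mem_range.mp hn))
    rw [← mul_assoc, ← pow_succ'] at hann
    refine hann.trans_eq ?_
    rw [div_mul_cancel_right₀ hl₀.ne', one_div_pow, one_div]
  rw [pow_zero, one_mul, show 1 - l₀ = ‖a‖ from sub_sub_cancel _ _, radialPoint_norm_self ha]
    at hchain
  rw [hchain]
  calc _ ≤ B + ∑ n ∈ Finset.range N, c * (1 / 2) ^ n * B :=
        add_le_add hcore (Finset.sum_le_sum hann)
    _ = B + c * B * ∑ n ∈ Finset.range N, (1 / 2 : ℝ) ^ n := by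
        rw [Finset.mul_sum]; congr 1; exact Finset.sum_congr rfl fun n _ => by ring
    _ ≤ B + c * B * 2 := by
        gcongr
        · exact mul_nonneg (by positivity) (div_nonneg (hw.wInt_nonneg _) (by positivity))
        · exact sum_geometric_two_le N
    _ = (1 + 2 * c) * B := by ring

lemma RayPowerBound.exists_integral_div_rpow_le {β : ℝ} (h : RayPowerBound ω β)
    (hw : IsWeight ω) (hβ : 0 ≤ β) (hpos : ∀ a : ℂ, a ≠ 0 → ‖a‖ < 1 → 0 < wInt ω (cSq a)) :
    ∃ η C : ℝ, 0 < η ∧ 0 < C ∧ ∀ a : ℂ, a ≠ 0 → ‖a‖ < 1 →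
      (∫ z in uD, ω z / ‖1 - (starRingEnd ℂ) a * z‖ ^ η ∂dA) ≤
        C * (wInt ω (cSq a) / (1 - ‖a‖) ^ η) := by
  obtain ⟨K, hK, hKle⟩ := h.exists_wInt_uD_le hw hβ hpos
  refine ⟨β + 1, 1 + 2 * ((2 * π) ^ (β + 1) * 4 ^ β) + (8 * π) ^ (β + 1) * K, by linarith,
    by positivity, fun a ha ha1 => ?_⟩
  have h1t : 0 < 1 - ‖a‖ := by linarith
  obtain ⟨N, hN1, hN⟩ := exists_two_pow_mul_mem_Ico h1t (by linarith [norm_pos_iff.mpr ha])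
  have hint := integrableOn_div_rpow hw ha1 (by linarith : 0 ≤ β + 1)
  have hB : wInt ω (cSq a) / (1 - ‖a‖) ^ β ≤ wInt ω (cSq a) / (1 - ‖a‖) ^ (β + 1) :=
    div_le_div_of_nonneg_left (hw.wInt_nonneg _) (by positivity)
      (Real.rpow_le_rpow_of_exponent_ge h1t (by linarith [norm_nonneg a]) (by linarith))
  rw [← union_sdiff_cancel (cSq_subset_uD (radialPoint a (1 - 2 ^ N * (1 - ‖a‖)))),
    setIntegral_union disjoint_sdiff_right (measurableSet_uD.diff (measurableSet_cSq _))
      (hint.mono_set (cSq_subset_uD _)) (hint.mono_set sdiff_subset),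
    add_mul (1 + _)]
  gcongr
  · exact h.setIntegral_cSq_le hw hβ ha ha1 hN
  · calc _ ≤ (8 * π) ^ (β + 1) * wInt ω uD :=
          setIntegral_uD_diff_cSq_le hw ha ha1 (by linarith) (by linarith) (by linarith)
      _ ≤ (8 * π) ^ (β + 1) * (K * (wInt ω (cSq a) / (1 - ‖a‖) ^ (β + 1))) := by
          gcongr; exact (hKle a ha ha1).trans (mul_le_mul_of_nonneg_left hB hK)
      _ = _ := by ring

lemma DhatD.of_integral_div_rpow_le (hw : IsWeight ω)
    (h : ∃ η C : ℝ, 0 < η ∧ 0 < C ∧ ∀ a : ℂ, a ≠ 0 → ‖a‖ < 1 →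
      (∫ z in uD, ω z / ‖1 - (starRingEnd ℂ) a * z‖ ^ η ∂dA) ≤
        C * (wInt ω (cSq a) / (1 - ‖a‖) ^ η)) :
    DhatD ω := by
  obtain ⟨η, C, hη, hC, h⟩ := h
  refine ⟨4 ^ η * C, by positivity, fun a ha ha1 => ?_⟩
  change _ ≤ _ * wInt ω (cSq (radialPoint a _))
  set b := radialPoint a ((1 + ‖a‖) / 2)
  have ht : 0 < ‖a‖ := norm_pos_iff.mpr ha
  have h1t : 0 < 1 - ‖a‖ := by linarith
  have hb : ‖b‖ = (1 + ‖a‖) / 2 := norm_radialPoint ha (by positivity)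
  have hb1 : ‖b‖ < 1 := by rw [hb]; linarith
  have hint := integrableOn_div_rpow hw hb1 hη.le
  have hker : ∀ z ∈ cSq a, 0 < ‖1 - (starRingEnd ℂ) b * z‖ ∧
      ‖1 - (starRingEnd ℂ) b * z‖ ≤ 2 * (1 - ‖a‖) := fun z hz =>
    ⟨(one_sub_norm_mul_le b z).trans_lt' (by nlinarith [hz.2.1, norm_nonneg z]),
      norm_one_sub_conj_mul_le_of_mem_cSq ha hz⟩
  have hkey := h b (radialPoint_ne_zero ha (by positivity)) hb1
  rw [hb, show 1 - (1 + ‖a‖) / 2 = (1 - ‖a‖) / 2 by ring] at hkey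
  calc wInt ω (cSq a)
      ≤ (2 * (1 - ‖a‖)) ^ η * ∫ z in cSq a, ω z / ‖1 - (starRingEnd ℂ) b * z‖ ^ η ∂dA :=
        wInt_le_rpow_mul_setIntegral hw hη.le hker (hint.mono_set (cSq_subset_uD a))
    _ ≤ (2 * (1 - ‖a‖)) ^ η * ∫ z in uD, ω z / ‖1 - (starRingEnd ℂ) b * z‖ ^ η ∂dA := by
        gcongr
        · exact .of_forall fun z => div_nonneg (hw.1 z) (by positivity)
        · exact cSq_subset_uD a
    _ ≤ (2 * (1 - ‖a‖)) ^ η * (C * (wInt ω (cSq b) / ((1 - ‖a‖) / 2) ^ η)) := by gcongr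
    _ = 4 ^ η * C * wInt ω (cSq b) := by
        rw [Real.mul_rpow zero_le_two h1t.le, Real.div_rpow h1t.le zero_le_two,
          show (4 : ℝ) = 2 * 2 by norm_num, Real.mul_rpow zero_le_two zero_le_two]
        field_simp

end Weight

/-- characterizations of the class `D̂(𝔻)`. -/
theorem DhatD_characterizations (ω : ℂ → ℝ) (hw : IsWeight ω)
    (hpos : ∀ a : ℂ, a ≠ 0 → ‖a‖ < 1 → 0 < wInt ω (cSq a)) :
    (DhatD ω ↔ ∃ β C : ℝ, 0 < β ∧ 1 ≤ C ∧ ∀ a a' : ℂ, a ≠ 0 →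
        ‖a‖ ≤ ‖a'‖ → ‖a'‖ < 1 →
        Complex.arg a = Complex.arg a' →
        wInt ω (cSq a) / (1 - ‖a‖) ^ β ≤
          C * (wInt ω (cSq a') / (1 - ‖a'‖) ^ β)) ∧
    (DhatD ω ↔ ∀ K : ℝ, 0 < K → ∃ C : ℝ, 0 < C ∧ ∀ a : ℂ, a ≠ 0 → ‖a‖ < 1 →
        wInt ω (cSq a) ≤ C * wInt ω
          (cSq ((((K + ‖a‖) / (K + 1) : ℝ) : ℂ) * (a / (‖a‖ : ℂ))))) ∧
    (DhatD ω ↔ ∃ η C : ℝ, 0 < η ∧ 0 < C ∧ ∀ a : ℂ, a ≠ 0 → ‖a‖ < 1 →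
        (∫ z in uD, ω z / ‖1 - (starRingEnd ℂ) a * z‖ ^ η ∂dA) ≤
          C * (wInt ω (cSq a) / (1 - ‖a‖) ^ η)) := by
  refine ⟨⟨fun h => ?_, DhatD.of_div_rpow_le⟩, ⟨fun h K hK => ?_, DhatD.of_le_mul_wInt_cSq⟩,
    ⟨fun h => ?_, DhatD.of_integral_div_rpow_le hw⟩⟩ <;>
    obtain ⟨β, hβ, hray⟩ := h.exists_rayPowerBound hw
  · exact ⟨β, 2 ^ β, hβ, Real.one_le_rpow one_le_two hβ.le, hray.div_rpow_le⟩
  · exact hray.le_mul_wInt_cSq hK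
  · exact hray.exists_integral_div_rpow_le hw hβ.le hpos

end
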